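/- arXiv:1004.5236 — 6 statements merged into one kernel-verified Lean document; each statement's English description precedes it below -/
import Mathlib

section
/- There is a constant c > 0 and N : ℕ such that for every n ≥ N there exists an n-operator f : (Fin n → Bool) → (Fin n → Bool) such that every general boolean circuit on n inputs computing f has size (number of wires) at least c * n^2. -/
/-- A general boolean circuit on `n` inputs with `m` nodes: each gate computes an
arbitrary boolean function of its predecessors; there is no fanin/fanout restriction. -/
structure GenCircuit (n m : ℕ) where
  hnm : n ≤ m
  pred : Fin m → Finset (Fin m)
  out : Fin n → Fin m
  val : (Fin n → Bool) → (Fin m → Bool)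
  pred_lt : ∀ i : Fin m, ∀ j ∈ pred i, j < i
  pred_input : ∀ i : Fin m, (i : ℕ) < n → pred i = ∅
  val_input : ∀ (x : Fin n → Bool) (i : Fin m) (h : (i : ℕ) < n), val x i = x ⟨i, h⟩
  val_gate : ∀ i : Fin m, n ≤ (i : ℕ) → ∀ x y : Fin n → Bool,
    (∀ j ∈ pred i, val x j = val y j) → val x i = val y i

/-- The circuit computes the operator `f` if the value at the `i`-th output node is `f x i`. -/
def GenCircuit.Computes {n m : ℕ} (Φ : GenCircuit n m)
    (f : (Fin n → Bool) → (Fin n → Bool)) : Prop :=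
  ∀ (x : Fin n → Bool) (i : Fin n), Φ.val x (Φ.out i) = f x i

/-- The size of a circuit is its total number of wires. -/
def GenCircuit.size {n m : ℕ} (Φ : GenCircuit n m) : ℕ :=
  ∑ i : Fin m, (Φ.pred i).card

/-!
A counting argument. In a circuit with at most `S` wires at most `S` nodes have an incoming
wire; every other non-input node is constant. Such a circuit is therefore described by a
straight-line program with `S + 2` gates (two constants, then the wired nodes in order) whose
gate `t` reads a set of `k_t` earlier slots with `∑ k_t ≤ S`. As the input ranges over
`{0,1}ⁿ`, gate `t` sees at most `min (2 ^ k_t) (2 ^ n)` distinct patterns on its predecessors,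
so its function is a lookup table of that length indexed by the pattern. Because
`n * min (2 ^ k) (2 ^ n) ≤ (k + 1) * 2 ^ n`, all tables together take at most
`(2 S + 2) 2ⁿ / n` bits, and the wiring and the outputs only polynomially many. For
`S = n² / 8` this is less than the `n 2ⁿ` bits needed to single out one of the `2 ^ (n 2ⁿ)`
operators, so some operator needs more than `n² / 8` wires.
-/

open Finset Function Filter

section Lookup

variable {X Y β : Type*} [Fintype X] [Fintype Y] [DecidableEq Y]

/-- The position of `φ x` in the range of `φ`. The bound `min (card Y) (card X)` does not depend
on `φ`, so tables indexed by it have a type fixed by the wiring alone. -/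
noncomputable def rangeIndex (φ : X → Y) (x : X) : Fin (min (Fintype.card Y) (Fintype.card X)) :=
  Fin.castLE (le_min (card_le_univ _) (card_image_le.trans_eq card_univ))
    ((univ.image φ).equivFin ⟨φ x, mem_image_of_mem φ (mem_univ x)⟩)

theorem factorsThrough_rangeIndex (φ : X → Y) : FactorsThrough φ (rangeIndex φ) := by
  intro x y h
  simpa using (univ.image φ).equivFin.injective (Fin.castLE_injective _ h)

noncomputable def lookupTable [Inhabited β] (φ : X → Y) (g : X → β)
    (i : Fin (min (Fintype.card Y) (Fintype.card X))) : β :=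
  if h : ∃ x, rangeIndex φ x = i then g h.choose else default

theorem lookupTable_rangeIndex [Inhabited β] {φ : X → Y} {g : X → β} (hg : FactorsThrough g φ)
    (x : X) : lookupTable φ g (rangeIndex φ x) = g x := by
  have h : ∃ y, rangeIndex φ y = rangeIndex φ x := ⟨x, rfl⟩
  rw [lookupTable, dif_pos h]
  exact hg (factorsThrough_rangeIndex φ h.choose_spec)

end Lookup

section GateCode

variable {ι X : Type*} [DecidableEq ι] [Fintype X] {W : ℕ}

def pattern {κ : Type*} (V : κ → X → Bool) (s : Finset κ) (x : X) : s → Bool :=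
  fun k => V k x

abbrev GateCode (ι X : Type*) [DecidableEq ι] [Fintype X] (W : ℕ) : Type _ :=
  Σ p : Fin W → Finset (ι ⊕ Fin W),
    (t : Fin W) → Fin (min (Fintype.card (p t → Bool)) (Fintype.card X)) → Bool

noncomputable def gateCode (inp : ι → X → Bool) (p : Fin W → Finset (ι ⊕ Fin W))
    (F : Fin W → X → Bool) : GateCode ι X W :=
  ⟨p, fun t => lookupTable (pattern (Sum.elim inp F) (p t)) (F t)⟩

theorem eq_of_gateCode_eq {inp : ι → X → Bool} {p q : Fin W → Finset (ι ⊕ Fin W)}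
    {F G : Fin W → X → Bool} (hp : ∀ t t', .inr t' ∈ p t → t' < t)
    (hF : ∀ t, FactorsThrough (F t) (pattern (Sum.elim inp F) (p t)))
    (hG : ∀ t, FactorsThrough (G t) (pattern (Sum.elim inp G) (q t)))
    (h : gateCode inp p F = gateCode inp q G) : F = G := by
  -- Along the gate order: once the earlier gates agree, gate `t` sees the same patterns in `F`
  -- and in `G` and reads them from the same table.
  obtain ⟨rfl, htab⟩ := Sigma.mk.inj_iff.mp h
  funext t
  induction t using WellFoundedLT.induction with
  | ind t ih =>
    have hpat : pattern (Sum.elim inp F) (p t) = pattern (Sum.elim inp G) (p t) := by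
      funext x ⟨k, hk⟩
      cases k with
      | inl i => rfl
      | inr t' => exact congrFun (ih t' (hp t t' hk)) x
    funext x
    rw [← lookupTable_rangeIndex (hF t) x, ← lookupTable_rangeIndex (hG t) x,
      congrFun (eq_of_heq htab) t, hpat]

end GateCode

namespace GenCircuit

variable {n m : ℕ} (Φ : GenCircuit n m)

def wired : Finset (Fin m) := univ.filter fun v => (Φ.pred v).Nonempty

theorem card_wired_le_size : #Φ.wired ≤ Φ.size :=
  calc #Φ.wired = ∑ _v ∈ Φ.wired, 1 := card_eq_sum_ones _
    _ ≤ ∑ v ∈ Φ.wired, #(Φ.pred v) := sum_le_sum fun _v hv => card_pos.mpr (mem_filter.mp hv).2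
    _ ≤ Φ.size := sum_le_sum_of_subset (subset_univ _)

theorem le_of_mem_wired {v : Fin m} (hv : v ∈ Φ.wired) : n ≤ v := by
  by_contra! h
  simp [wired, Φ.pred_input v h] at hv

theorem val_eq_of_notMem_wired {v : Fin m} (hv : v ∉ Φ.wired) (hvn : n ≤ v)
    (x y : Fin n → Bool) : Φ.val x v = Φ.val y v :=
  Φ.val_gate v hvn x y fun u hu => absurd (mem_filter.mpr ⟨mem_univ v, u, hu⟩) hv

noncomputable def wiredIso : Fin #Φ.wired ≃o Φ.wired := Φ.wired.orderIsoOfFin rfl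

/-- Gates `0` and `1` hold the constants `false` and `true`, gate `k + 2` holds the `k`-th wired
node; unwired nodes are constants and are sent to gate `0` or `1`. -/
noncomputable def gateIdx (v : Fin m) : ℕ :=
  if hv : v ∈ Φ.wired then (Φ.wiredIso.symm ⟨v, hv⟩ : ℕ) + 2
  else (Φ.val (fun _ => false) v).toNat

theorem gateIdx_lt (v : Fin m) : Φ.gateIdx v < #Φ.wired + 2 := by
  unfold gateIdx
  split_ifs
  · simp
  · have := Bool.toNat_le (Φ.val (fun _ => false) v)
    omega

theorem gateIdx_lt_gateIdx_of_lt {u v : Fin m} (hv : v ∈ Φ.wired) (huv : u < v) :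
    Φ.gateIdx u < Φ.gateIdx v := by
  unfold gateIdx
  rw [dif_pos hv]
  split_ifs with hu
  · have : Φ.wiredIso.symm ⟨u, hu⟩ < Φ.wiredIso.symm ⟨v, hv⟩ := Φ.wiredIso.symm.strictMono huv
    simpa using this
  · have := Bool.toNat_le (Φ.val (fun _ => false) u)
    omega

variable (S : ℕ)

noncomputable def gateNode (t : Fin (S + 2)) : Option (Fin m) :=
  if h : 2 ≤ (t : ℕ) ∧ (t : ℕ) - 2 < #Φ.wired then
    some (Φ.wiredIso ⟨t - 2, h.2⟩)
  else none

theorem gateNode_eq_some_iff {t : Fin (S + 2)} {v : Fin m} :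
    Φ.gateNode S t = some v ↔ v ∈ Φ.wired ∧ Φ.gateIdx v = t := by
  unfold gateNode
  constructor
  · split_ifs with ht
    · rintro ⟨⟩
      refine ⟨(Φ.wiredIso _).2, ?_⟩
      simp only [gateIdx, Subtype.coe_eta, (Φ.wiredIso _).2, dif_pos, OrderIso.symm_apply_apply]
      omega
    · rintro ⟨⟩
  · rintro ⟨hv, hvt⟩
    simp only [gateIdx, dif_pos hv] at hvt
    rw [dif_pos (by omega), Option.some_inj,
      show (⟨t - 2, _⟩ : Fin _) = Φ.wiredIso.symm ⟨v, hv⟩ from Fin.ext (by dsimp only; omega),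
      OrderIso.apply_symm_apply]

noncomputable def gateFun (t : Fin (S + 2)) (x : Fin n → Bool) : Bool :=
  (Φ.gateNode S t).elim ((t : ℕ) = 1) (Φ.val x)

noncomputable def slot (v : Fin m) : Fin n ⊕ Fin (S + 2) :=
  if h : (v : ℕ) < n then .inl ⟨v, h⟩ else .inr (Fin.ofNat (S + 2) (Φ.gateIdx v))

noncomputable def gatePreds (t : Fin (S + 2)) : Finset (Fin n ⊕ Fin (S + 2)) :=
  (Φ.gateNode S t).elim ∅ fun v => (Φ.pred v).image (Φ.slot S)

variable {S}

theorem val_ofNat_gateIdx (hS : #Φ.wired ≤ S) (v : Fin m) :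
    (Fin.ofNat (S + 2) (Φ.gateIdx v) : ℕ) = Φ.gateIdx v :=
  Nat.mod_eq_of_lt ((Φ.gateIdx_lt v).trans_le (by omega))

theorem gateNode_ofNat_gateIdx (hS : #Φ.wired ≤ S) {v : Fin m} (hv : v ∈ Φ.wired) :
    Φ.gateNode S (Fin.ofNat (S + 2) (Φ.gateIdx v)) = some v :=
  (Φ.gateNode_eq_some_iff S).mpr ⟨hv, (Φ.val_ofNat_gateIdx hS v).symm⟩

theorem gateNode_eq_none_of_lt_two {t : Fin (S + 2)} (ht : (t : ℕ) < 2) : Φ.gateNode S t = none :=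
  dif_neg fun h => by omega

theorem elim_gateFun_slot (hS : #Φ.wired ≤ S) (v : Fin m) (x : Fin n → Bool) :
    Sum.elim (fun i x => x i) (Φ.gateFun S) (Φ.slot S v) x = Φ.val x v := by
  unfold slot
  split_ifs with hvn
  · simp [Φ.val_input x v hvn]
  simp only [Sum.elim_inr, gateFun]
  by_cases hv : v ∈ Φ.wired
  · rw [Φ.gateNode_ofNat_gateIdx hS hv]
    rfl
  have hidx := Φ.val_ofNat_gateIdx hS v
  simp only [gateIdx, dif_neg hv] at hidx ⊢
  rw [Φ.gateNode_eq_none_of_lt_two (by have := Bool.toNat_le (Φ.val (fun _ => false) v); omega),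
    Option.elim_none, hidx, Φ.val_eq_of_notMem_wired hv (by omega) x]
  cases Φ.val (fun _ => false) v <;> rfl

theorem lt_of_inr_mem_gatePreds (hS : #Φ.wired ≤ S) {t t' : Fin (S + 2)}
    (h : .inr t' ∈ Φ.gatePreds S t) : t' < t := by
  unfold gatePreds at h
  cases ht : Φ.gateNode S t with
  | none => simp [ht] at h
  | some w =>
    obtain ⟨hw, hwt⟩ := (Φ.gateNode_eq_some_iff S).mp ht
    simp only [ht, Option.elim_some, mem_image] at h
    obtain ⟨u, hu, hut'⟩ := h
    unfold slot at hut'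
    split_ifs at hut' with hun
    cases hut'
    rw [Fin.lt_def, Φ.val_ofNat_gateIdx hS, ← hwt]
    exact Φ.gateIdx_lt_gateIdx_of_lt hw (Φ.pred_lt w u hu)

theorem factorsThrough_gateFun (hS : #Φ.wired ≤ S) (t : Fin (S + 2)) :
    FactorsThrough (Φ.gateFun S t)
      (pattern (Sum.elim (fun i x => x i) (Φ.gateFun S)) (Φ.gatePreds S t)) := by
  intro x y hxy
  unfold gateFun
  cases hw : Φ.gateNode S t with
  | none => rfl
  | some w =>
    refine Φ.val_gate w (Φ.le_of_mem_wired ((Φ.gateNode_eq_some_iff S).mp hw).1) x y fun u hu => ?_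
    have hmem : Φ.slot S u ∈ Φ.gatePreds S t := by
      simp only [gatePreds, hw, Option.elim_some]
      exact mem_image_of_mem _ hu
    simpa [pattern, Φ.elim_gateFun_slot hS] using congrFun hxy ⟨_, hmem⟩

theorem sum_card_gatePreds_le (hS : #Φ.wired ≤ S) : ∑ t, #(Φ.gatePreds S t) ≤ Φ.size :=
  calc ∑ t, #(Φ.gatePreds S t) ≤ ∑ t, (Φ.gateNode S t).elim 0 fun v => #(Φ.pred v) :=
        sum_le_sum fun t _ => by
          unfold gatePreds
          cases Φ.gateNode S t
          · rfl
          · exact card_image_le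
    _ = ∑ v ∈ Φ.wired, #(Φ.pred v) := by
        refine (sum_of_injOn (fun v => Fin.ofNat (S + 2) (Φ.gateIdx v)) ?_ (by simp) ?_ ?_).symm
        · intro u hu v hv huv
          have := congrArg (Φ.gateNode S) huv
          rwa [Φ.gateNode_ofNat_gateIdx hS hu, Φ.gateNode_ofNat_gateIdx hS hv,
            Option.some_inj] at this
        · intro t _ ht
          cases hw : Φ.gateNode S t with
          | none => rfl
          | some w =>
            obtain ⟨hw, hwt⟩ := (Φ.gateNode_eq_some_iff S).mp hw
            exact absurd ⟨w, hw, Fin.ext ((Φ.val_ofNat_gateIdx hS w).trans hwt)⟩ ht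
        · intro v hv
          rw [Φ.gateNode_ofNat_gateIdx hS hv]
          rfl
    _ ≤ Φ.size := sum_le_sum_of_subset (subset_univ _)

end GenCircuit

/-- Wiring of `S + 2` gates with at most `S` wires, the lookup tables of the gates, and the slots
of the `n` outputs. -/
abbrev CircuitCode (n S : ℕ) : Type :=
  Σ p : {p : Fin (S + 2) → Finset (Fin n ⊕ Fin (S + 2)) // ∑ t, #(p t) ≤ S},
    ((t : Fin (S + 2)) →
      Fin (min (Fintype.card (p.1 t → Bool)) (Fintype.card (Fin n → Bool))) → Bool) ×
    (Fin n → Fin n ⊕ Fin (S + 2))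

def CircuitCode.toGateCode {n S : ℕ} (c : CircuitCode n S) :
    GateCode (Fin n) (Fin n → Bool) (S + 2) :=
  ⟨c.1.1, c.2.1⟩

noncomputable def GenCircuit.encode {n m S : ℕ} (Φ : GenCircuit n m) (hS : Φ.size ≤ S) :
    CircuitCode n S :=
  ⟨⟨Φ.gatePreds S, (Φ.sum_card_gatePreds_le (Φ.card_wired_le_size.trans hS)).trans hS⟩,
    (gateCode (fun i x => x i) (Φ.gatePreds S) (Φ.gateFun S)).2, fun i => Φ.slot S (Φ.out i)⟩

theorem eq_of_encode_eq {n m m' S : ℕ} {Φ : GenCircuit n m} {Ψ : GenCircuit n m'}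
    {f g : (Fin n → Bool) → Fin n → Bool} (hΦ : Φ.Computes f) (hΨ : Ψ.Computes g)
    {hΦS : Φ.size ≤ S} {hΨS : Ψ.size ≤ S} (h : Φ.encode hΦS = Ψ.encode hΨS) : f = g := by
  have hΦW := Φ.card_wired_le_size.trans hΦS
  have hΨW := Ψ.card_wired_le_size.trans hΨS
  have hgates : Φ.gateFun S = Ψ.gateFun S :=
    eq_of_gateCode_eq (fun _ _ => Φ.lt_of_inr_mem_gatePreds hΦW) (Φ.factorsThrough_gateFun hΦW)
      (Ψ.factorsThrough_gateFun hΨW) (congrArg CircuitCode.toGateCode h)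
  have hout : ∀ i, Φ.slot S (Φ.out i) = Ψ.slot S (Ψ.out i) :=
    congrFun (congrArg (fun c => c.2.2) h)
  funext x i
  rw [← hΦ x i, ← hΨ x i, ← Φ.elim_gateFun_slot hΦW, ← Ψ.elim_gateFun_slot hΨW, hout i, hgates]

theorem exists_forall_computes_lt_size {n S : ℕ}
    (h : Fintype.card (CircuitCode n S) < Fintype.card ((Fin n → Bool) → Fin n → Bool)) :
    ∃ f : (Fin n → Bool) → Fin n → Bool, ∀ m (Φ : GenCircuit n m), Φ.Computes f → S < Φ.size := by
  by_contra! hall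
  choose m Φ hΦ hS using hall
  exact h.not_ge (Fintype.card_le_of_injective (fun f => (Φ f).encode (hS f))
    fun f g hfg => eq_of_encode_eq (hΦ f) (hΦ g) hfg)

theorem mul_min_two_pow_le (k n : ℕ) : n * min (2 ^ k) (2 ^ n) ≤ (k + 1) * 2 ^ n := by
  rcases le_total k n with hkn | hnk
  · rw [min_eq_left (Nat.pow_le_pow_right two_pos hkn)]
    obtain ⟨d, rfl⟩ := Nat.exists_eq_add_of_le hkn
    have hd : d + 1 ≤ 2 ^ d := Nat.lt_two_pow_self
    calc (k + d) * 2 ^ k ≤ (k + 1) * 2 ^ d * 2 ^ k := Nat.mul_le_mul_right _ (by nlinarith)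
      _ = (k + 1) * 2 ^ (k + d) := by ring
  · rw [min_eq_right (Nat.pow_le_pow_right two_pos hnk)]
    exact Nat.mul_le_mul_right _ (by omega)

theorem card_circuitCode_le {n : ℕ} (hn : 0 < n) (S : ℕ) :
    Fintype.card (CircuitCode n S) ≤ 2 ^ ((n + S + 2) ^ 2 + (2 * S + 2) * 2 ^ n / n) := by
  set B := (2 * S + 2) * 2 ^ n / n
  set P := {p : Fin (S + 2) → Finset (Fin n ⊕ Fin (S + 2)) // ∑ t, #(p t) ≤ S}
  have htables (p : P) : ∑ t, min (2 ^ #(p.1 t)) (2 ^ n) ≤ B := by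
    rw [Nat.le_div_iff_mul_le hn, sum_mul]
    calc ∑ t, min (2 ^ #(p.1 t)) (2 ^ n) * n ≤ ∑ t, (#(p.1 t) + 1) * 2 ^ n :=
          sum_le_sum fun t _ => by rw [mul_comm]; exact mul_min_two_pow_le _ _
      _ = (∑ t, #(p.1 t) + (S + 2)) * 2 ^ n := by simp [sum_add_distrib, add_mul, sum_mul]
      _ ≤ (2 * S + 2) * 2 ^ n := Nat.mul_le_mul_right _ (by have := p.2; omega)
  have hcode (p : P) : Fintype.card (((t : Fin (S + 2)) →
      Fin (min (Fintype.card (p.1 t → Bool)) (Fintype.card (Fin n → Bool))) → Bool) ×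
      (Fin n → Fin n ⊕ Fin (S + 2))) ≤ 2 ^ B * (2 ^ (n + S + 2)) ^ n := by
    rw [Fintype.card_prod, Fintype.card_pi]
    simp only [Fintype.card_fun, Fintype.card_bool, Fintype.card_fin, Fintype.card_coe,
      Fintype.card_sum, prod_pow_eq_pow_sum]
    exact Nat.mul_le_mul (Nat.pow_le_pow_right two_pos (htables p))
      (Nat.pow_le_pow_left Nat.lt_two_pow_self.le n)
  have hP : Fintype.card P ≤ (2 ^ (n + S + 2)) ^ (S + 2) :=
    (Fintype.card_subtype_le _).trans_eq (by simp [Fintype.card_finset, add_assoc])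
  rw [Fintype.card_sigma]
  calc ∑ p, _ ≤ ∑ _p : P, 2 ^ B * (2 ^ (n + S + 2)) ^ n := sum_le_sum fun p _ => hcode p
    _ = Fintype.card P * (2 ^ B * (2 ^ (n + S + 2)) ^ n) := by
        rw [sum_const, card_univ, smul_eq_mul]
    _ ≤ (2 ^ (n + S + 2)) ^ (S + 2) * (2 ^ B * (2 ^ (n + S + 2)) ^ n) :=
        Nat.mul_le_mul_right _ hP
    _ = 2 ^ ((n + S + 2) ^ 2 + B) := by
        rw [← pow_mul, ← pow_mul, ← pow_add, ← pow_add]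
        ring_nf

theorem eventually_card_circuitCode_lt : ∀ᶠ n in atTop,
    Fintype.card (CircuitCode n (n ^ 2 / 8)) < Fintype.card ((Fin n → Bool) → Fin n → Bool) := by
  have hpow : ∀ᶠ n : ℕ in atTop, n ^ 5 < 2 ^ n := by
    filter_upwards [(tendsto_pow_const_div_const_pow_of_one_lt 5 one_lt_two).eventually
      (gt_mem_nhds one_pos)] with n hn
    exact_mod_cast (div_lt_one (by positivity)).mp hn
  filter_upwards [hpow, eventually_ge_atTop 3] with n hpow hn
  set S := n ^ 2 / 8
  have hS : 8 * S ≤ n ^ 2 := Nat.mul_div_le _ _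
  refine (card_circuitCode_le (by omega) S).trans_lt ?_
  rw [Fintype.card_fun, Fintype.card_fun, Fintype.card_bool, Fintype.card_fin, ← pow_mul]
  refine Nat.pow_lt_pow_right one_lt_two (Nat.lt_of_mul_lt_mul_left (a := n) ?_)
  have hslots : n + S + 2 ≤ n ^ 2 := by nlinarith
  have hdiv := Nat.div_mul_le_self ((2 * S + 2) * 2 ^ n) n
  calc n * ((n + S + 2) ^ 2 + (2 * S + 2) * 2 ^ n / n)
      ≤ n * (n ^ 2) ^ 2 + (2 * S + 2) * 2 ^ n := by
        rw [mul_add, mul_comm n (_ / n)]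
        gcongr
    _ < 2 ^ n + (2 * S + 2) * 2 ^ n := by
        have : n * (n ^ 2) ^ 2 = n ^ 5 := by ring
        omega
    _ ≤ n * (n * 2 ^ n) := by
        rw [← one_add_mul, ← mul_assoc, ← sq]
        exact Nat.mul_le_mul_right _ (by nlinarith)

/-- There exist `n`-operators requiring `Ω(n²)` wires in any general circuit. -/
theorem exists_operator_requiring_quadratic_wires :
    ∃ c : ℝ, c > 0 ∧ ∃ N : ℕ, ∀ n ≥ N,
      ∃ f : (Fin n → Bool) → (Fin n → Bool),
        ∀ (m : ℕ) (Φ : GenCircuit n m), Φ.Computes f →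
          c * (n : ℝ) ^ 2 ≤ (Φ.size : ℝ) := by
  obtain ⟨N, hN⟩ := eventually_atTop.mp eventually_card_circuitCode_lt
  refine ⟨1 / 8, by norm_num, N, fun n hn => ?_⟩
  obtain ⟨f, hf⟩ := exists_forall_computes_lt_size (hN n hn)
  refine ⟨f, fun m Φ hΦ => ?_⟩
  have hsize : n ^ 2 < 8 * Φ.size := by
    have := hf m Φ hΦ
    omega
  have : (n : ℝ) ^ 2 < 8 * Φ.size := by exact_mod_cast hsize
  linarith
end

section
/- There is a constant c > 0 and N : ℕ such that for every n ≥ N, the cardinality of the set of n-operators f : (Fin n → Bool) → (Fin n → Bool) that are computable by some general boolean circuit on n inputs of size at most c * n^2 is at most 2^(n * 2^n) / 2^(2^(n-1)); in particular, the fraction of n-operators computable with at most c * n^2 wires tends to 0 (almost all n-operators require more than c * n^2 wires). -/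
/-!
A circuit with `s` wires computing `f` can be normalised to one with exactly `m = 2n + s` nodes
(keep the inputs, the outputs and the sources of wires, pad with constant gates) in which every
gate has fan-in at most `n`: a gate with more than `n` predecessors is a function of the inputs
and can be wired to them directly. Such a circuit, and hence `f`, is determined by its wiring
(at most `2 ^ m²` choices), its output nodes (`m ^ n`) and its gate tables, and a gate of fan-in
`k ≤ n` has `2 ^ 2 ^ k` tables. By convexity of `k ↦ 2 ^ k`, `∑ 2 ^ kᵢ ≤ 2 ^ n s / n + m`, so for
`s ≤ n² / 8` there are at most `2 ^ (n 2 ^ n / 8 + poly n)` such circuits, far fewer than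
`2 ^ (n 2 ^ n - 2 ^ (n - 1))`.
-/

open Finset

namespace Fin

variable {M m : ℕ}

lemma val_le_val_orderEmbedding (ψ : Fin M ↪o Fin m) (r : Fin M) : (r : ℕ) ≤ ψ r := by
  calc (r : ℕ) = #((Iio r).map ψ.toEmbedding) := by rw [card_map, card_Iio]
    _ ≤ #(Iio (ψ r)) := card_le_card fun u hu => by
        obtain ⟨r', hr', rfl⟩ := mem_map.1 hu
        exact mem_Iio.2 (ψ.lt_iff_lt.2 (mem_Iio.1 hr'))
    _ = ψ r := card_Iio _

lemma val_orderEmbedding_eq_of_lt {n : ℕ} {ψ : Fin M ↪o Fin m}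
    (hψ : ∀ u : Fin m, (u : ℕ) < n → u ∈ Set.range ψ) (r : Fin M) (hr : (r : ℕ) < n) :
    (ψ r : ℕ) = r := by
  induction r using WellFoundedLT.induction with
  | _ r ih =>
    have hrm : (r : ℕ) < m := (val_le_val_orderEmbedding ψ r).trans_lt (ψ r).2
    obtain ⟨r', hr'⟩ := hψ ⟨r, hrm⟩ hr
    rcases lt_trichotomy r' r with h | rfl | h
    · have := ih r' h ((Fin.lt_def.1 h).trans hr)
      rw [hr'] at this
      exact absurd this.symm (Fin.val_ne_of_ne h.ne)
    · exact congrArg Fin.val hr'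
    · have := ψ.lt_iff_lt.2 h
      rw [hr', Fin.lt_def] at this
      exact absurd this (not_lt.2 (val_le_val_orderEmbedding ψ r))

end Fin

namespace Nat

-- The chord of the convex function `k ↦ 2 ^ k` on `[0, n]`.
lemma mul_two_pow_le_of_le {k n : ℕ} (hk : k ≤ n) : n * 2 ^ k ≤ k * 2 ^ n + n := by
  induction n, hk using Nat.le_induction with
  | base => omega
  | succ n hkn ih =>
    have : 2 ^ k ≤ k * 2 ^ n + 1 := by
      rcases Nat.eq_zero_or_pos k with rfl | hk
      · simp
      · calc 2 ^ k ≤ 2 ^ n := Nat.pow_le_pow_right two_pos hkn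
          _ ≤ k * 2 ^ n := Nat.le_mul_of_pos_left _ hk
          _ ≤ k * 2 ^ n + 1 := Nat.le_succ _
    rw [pow_succ]
    nlinarith

lemma cube_le_two_pow {n : ℕ} (hn : 10 ≤ n) : n ^ 3 ≤ 2 ^ n := by
  induction n, hn using Nat.le_induction with
  | base => norm_num
  | succ n hn ih =>
    have h1 : 10 * (n * n) ≤ n * (n * n) := Nat.mul_le_mul_right _ hn
    have h2 : 10 * n ≤ n * n := Nat.mul_le_mul_right _ hn
    calc (n + 1) ^ 3 ≤ 2 * n ^ 3 := by nlinarith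
      _ ≤ 2 * 2 ^ n := by omega
      _ = 2 ^ (n + 1) := by ring

end Nat

namespace GenCircuit

variable {n m s : ℕ} (Φ : GenCircuit n m)

def inputNodes : Finset (Fin m) := univ.map (Fin.castLEEmb Φ.hnm)

lemma mem_inputNodes {u : Fin m} : u ∈ Φ.inputNodes ↔ (u : ℕ) < n := by
  simp only [inputNodes, mem_map, mem_univ, true_and, Fin.castLEEmb_apply]
  exact ⟨fun ⟨k, hk⟩ => hk ▸ k.2, fun h => ⟨⟨u, h⟩, rfl⟩⟩

lemma card_inputNodes : #Φ.inputNodes = n := by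
  simp [inputNodes]

lemma eq_of_val_eq_on_inputNodes {x y : Fin n → Bool}
    (h : ∀ u ∈ Φ.inputNodes, Φ.val x u = Φ.val y u) : x = y := by
  funext k
  have hk : (Fin.castLE Φ.hnm k : ℕ) < n := k.2
  simpa [Φ.val_input x _ hk, Φ.val_input y _ hk] using h _ ((Φ.mem_inputNodes).2 hk)

def usedNodes : Finset (Fin m) := Φ.inputNodes ∪ univ.image Φ.out ∪ univ.biUnion Φ.pred

lemma card_usedNodes_le : #Φ.usedNodes ≤ 2 * n + Φ.size := by
  calc #Φ.usedNodes ≤ #Φ.inputNodes + #(univ.image Φ.out) + #(univ.biUnion Φ.pred) :=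
        (card_union_le _ _).trans (Nat.add_le_add_right (card_union_le _ _) _)
    _ ≤ n + n + Φ.size := by
        gcongr
        · exact Φ.card_inputNodes.le
        · exact card_image_le.trans (by simp)
        · exact card_biUnion_le
    _ = 2 * n + Φ.size := by ring

lemma mem_usedNodes_of_lt {u : Fin m} (hu : (u : ℕ) < n) : u ∈ Φ.usedNodes := by
  simp [usedNodes, Φ.mem_inputNodes, hu]

lemma out_mem_usedNodes (k : Fin n) : Φ.out k ∈ Φ.usedNodes := by
  simp [usedNodes]

lemma mem_usedNodes_of_mem_pred {i j : Fin m} (hj : j ∈ Φ.pred i) : j ∈ Φ.usedNodes :=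
  mem_union_right _ (mem_biUnion.2 ⟨i, mem_univ _, hj⟩)

def pad (k : ℕ) : GenCircuit n (m + k) where
  hnm := Φ.hnm.trans (Nat.le_add_right m k)
  pred := Fin.addCases (fun i => (Φ.pred i).map (Fin.castAddEmb k)) fun _ => ∅
  out i := Fin.castAdd k (Φ.out i)
  val x := Fin.addCases (Φ.val x) fun _ => false
  pred_lt i j hj := by
    induction i using Fin.addCases with
    | left i =>
      simp only [Fin.addCases_left, mem_map, Fin.castAddEmb_apply] at hj
      obtain ⟨j, hj, rfl⟩ := hj
      exact Fin.strictMono_castAdd k (Φ.pred_lt i j hj)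
    | right i => simp at hj
  pred_input i hi := by
    induction i using Fin.addCases with
    | left i => simp [Φ.pred_input i (by simpa using hi)]
    | right i => simp
  val_input x i hi := by
    induction i using Fin.addCases with
    | left i => simp [Φ.val_input x i (by simpa using hi)]
    | right i => have := Φ.hnm; simp at hi; omega
  val_gate i hi x y h := by
    induction i using Fin.addCases with
    | left i =>
      simp only [Fin.addCases_left]
      refine Φ.val_gate i (by simpa using hi) x y fun j hj => ?_
      simpa using h (Fin.castAdd k j) (by simpa using hj)
    | right i => simp

lemma pad_computes {f : (Fin n → Bool) → (Fin n → Bool)} (hf : Φ.Computes f) (k : ℕ) :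
    (Φ.pad k).Computes f := fun x i => by
  simpa [pad] using hf x i

lemma size_pad (k : ℕ) : (Φ.pad k).size = Φ.size := by
  simp [size, pad, Fin.sum_univ_add]

section comap

variable {M : ℕ} {ψ : Fin M ↪o Fin m}

lemma le_of_usedNodes_subset_range (hψ : ∀ u ∈ Φ.usedNodes, u ∈ Set.range ψ) : n ≤ M := by
  calc n = #Φ.inputNodes := Φ.card_inputNodes.symm
    _ ≤ #(univ.map ψ.toEmbedding) := card_le_card fun u hu => by
        obtain ⟨r, rfl⟩ := hψ u (mem_union_left _ (mem_union_left _ hu))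
        exact mem_map_of_mem _ (mem_univ r)
    _ = M := by simp

lemma val_apply_eq_of_usedNodes_subset_range (hψ : ∀ u ∈ Φ.usedNodes, u ∈ Set.range ψ)
    (r : Fin M) (hr : (r : ℕ) < n) : (ψ r : ℕ) = r :=
  Fin.val_orderEmbedding_eq_of_lt (fun _ hu => hψ _ (Φ.mem_usedNodes_of_lt hu)) r hr

/-- The subcircuit on the range of `ψ`, renumbered along `ψ`. Nothing is lost: the predecessors
of every node lie in `usedNodes`. -/
noncomputable def comap (ψ : Fin M ↪o Fin m) (hψ : ∀ u ∈ Φ.usedNodes, u ∈ Set.range ψ) :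
    GenCircuit n M where
  hnm := Φ.le_of_usedNodes_subset_range hψ
  pred r := (Φ.pred (ψ r)).preimage ψ ψ.injective.injOn
  out k := (hψ _ (Φ.out_mem_usedNodes k)).choose
  val x r := Φ.val x (ψ r)
  pred_lt r j hj := ψ.lt_iff_lt.1 (Φ.pred_lt _ _ (mem_preimage.1 hj))
  pred_input r hr := by
    rw [Φ.pred_input _ (by rwa [Φ.val_apply_eq_of_usedNodes_subset_range hψ r hr]),
      preimage_empty]
  val_input x r hr := by
    rw [Φ.val_input x _ (by rwa [Φ.val_apply_eq_of_usedNodes_subset_range hψ r hr])]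
    simp [Φ.val_apply_eq_of_usedNodes_subset_range hψ r hr]
  val_gate r hr x y h := Φ.val_gate _ (hr.trans (Fin.val_le_val_orderEmbedding ψ r)) x y
    fun j hj => by
      obtain ⟨r', rfl⟩ := hψ j (Φ.mem_usedNodes_of_mem_pred hj)
      exact h r' (mem_preimage.2 hj)

lemma comap_computes (hψ : ∀ u ∈ Φ.usedNodes, u ∈ Set.range ψ)
    {f : (Fin n → Bool) → (Fin n → Bool)} (hf : Φ.Computes f) : (Φ.comap ψ hψ).Computes f :=
  fun x k => by
    simp only [comap, (hψ _ (Φ.out_mem_usedNodes k)).choose_spec]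
    exact hf x k

lemma size_comap_le (hψ : ∀ u ∈ Φ.usedNodes, u ∈ Set.range ψ) :
    (Φ.comap ψ hψ).size ≤ Φ.size := by
  calc (Φ.comap ψ hψ).size ≤ ∑ r, #(Φ.pred (ψ r)) :=
        sum_le_sum fun r _ => by simpa [comap, card_preimage] using card_filter_le _ _
    _ = ∑ u ∈ univ.map ψ.toEmbedding, #(Φ.pred u) := by rw [sum_map]; rfl
    _ ≤ Φ.size := sum_le_sum_of_subset (subset_univ _)

end comap

/-- Rewire every gate of fan-in larger than `n` to the inputs: it computes a function of `x`. -/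
def boundFanin : GenCircuit n m where
  hnm := Φ.hnm
  pred i := if n < #(Φ.pred i) then Φ.inputNodes else Φ.pred i
  out := Φ.out
  val := Φ.val
  pred_lt i j hj := by
    split_ifs at hj with hc
    · have hi : n ≤ (i : ℕ) := by
        by_contra hi
        simp [Φ.pred_input i (not_le.1 hi)] at hc
      exact Fin.lt_def.2 (((Φ.mem_inputNodes).1 hj).trans_le hi)
    · exact Φ.pred_lt i j hj
  pred_input i hi := by simp [Φ.pred_input i hi]
  val_input := Φ.val_input
  val_gate i hi x y h := by
    split_ifs at h
    · rw [Φ.eq_of_val_eq_on_inputNodes h]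
    · exact Φ.val_gate i hi x y h

lemma boundFanin_computes {f : (Fin n → Bool) → (Fin n → Bool)} (hf : Φ.Computes f) :
    Φ.boundFanin.Computes f :=
  hf

lemma card_pred_boundFanin_le (i : Fin m) : #(Φ.boundFanin.pred i) ≤ n := by
  simp only [boundFanin]
  split_ifs with hc
  · exact Φ.card_inputNodes.le
  · exact not_lt.1 hc

lemma size_boundFanin_le : Φ.boundFanin.size ≤ Φ.size :=
  sum_le_sum fun i _ => by
    simp only [boundFanin]
    split_ifs with hc
    · exact Φ.card_inputNodes.le.trans hc.le
    · exact le_rfl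

theorem exists_normalForm {f : (Fin n → Bool) → (Fin n → Bool)} (hf : Φ.Computes f) {M : ℕ}
    (hM : 2 * n + Φ.size ≤ M) :
    ∃ Ψ : GenCircuit n M, Ψ.Computes f ∧ Ψ.size ≤ Φ.size ∧ ∀ i, #(Ψ.pred i) ≤ n := by
  set Φ' := Φ.pad M
  obtain ⟨S, hS, -, hSM⟩ := exists_subsuperset_card_eq (n := M) (subset_univ Φ'.usedNodes)
    (Φ'.card_usedNodes_le.trans (by rwa [Φ.size_pad])) (by simp)
  have hψ : ∀ u ∈ Φ'.usedNodes, u ∈ Set.range (S.orderEmbOfFin hSM) := by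
    simpa [range_orderEmbOfFin] using fun u hu => hS hu
  set Ψ := (Φ'.comap _ hψ).boundFanin
  refine ⟨Ψ, boundFanin_computes _ (comap_computes _ hψ (Φ.pad_computes hf M)), ?_,
    card_pred_boundFanin_le _⟩
  calc Ψ.size ≤ (Φ'.comap _ hψ).size := size_boundFanin_le _
    _ ≤ Φ'.size := size_comap_le _ hψ
    _ = Φ.size := Φ.size_pad M

abbrev Code (n m s : ℕ) : Type :=
  Σ p : {p : Fin m → Finset (Fin m) // ∑ i, #(p i) ≤ s ∧ ∀ i, #(p i) ≤ n},
    (∀ i, (p.1 i → Bool) → Bool) × (Fin n → Fin m)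

def Code.IsRun (c : Code n m s) (x : Fin n → Bool) (v : Fin m → Bool) : Prop :=
  (∀ (i : Fin m) (hi : (i : ℕ) < n), v i = x ⟨i, hi⟩) ∧
    ∀ i : Fin m, n ≤ (i : ℕ) → v i = c.2.1 i fun j => v j

-- `Classical.epsilon` picks some run; for the code of a circuit the run is unique.
noncomputable def Code.decode (c : Code n m s) (x : Fin n → Bool) (k : Fin n) : Bool :=
  Classical.epsilon (c.IsRun x) (c.2.2 k)

/-- The gate function of node `i`, extended by `false` to patterns that never occur. -/
noncomputable def gateTable (i : Fin m) (t : Φ.pred i → Bool) : Bool :=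
  open Classical in
  if h : ∃ x, ∀ j : Φ.pred i, Φ.val x j = t j then Φ.val h.choose i else false

lemma val_eq_gateTable (x : Fin n → Bool) {i : Fin m} (hi : n ≤ (i : ℕ)) :
    Φ.val x i = Φ.gateTable i fun j => Φ.val x j := by
  have h : ∃ y, ∀ j : Φ.pred i, Φ.val y j = Φ.val x j := ⟨x, fun _ => rfl⟩
  rw [gateTable, dif_pos h]
  exact Φ.val_gate i hi x _ fun j hj => (h.choose_spec ⟨j, hj⟩).symm

lemma eq_val_of_gateTable {x : Fin n → Bool} {v : Fin m → Bool}
    (hin : ∀ (i : Fin m) (hi : (i : ℕ) < n), v i = x ⟨i, hi⟩)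
    (hgate : ∀ i : Fin m, n ≤ (i : ℕ) → v i = Φ.gateTable i fun j => v j) : v = Φ.val x := by
  funext i
  induction i using WellFoundedLT.induction with
  | _ i ih =>
    by_cases hi : (i : ℕ) < n
    · rw [hin i hi, Φ.val_input x i hi]
    · rw [hgate i (not_lt.1 hi), Φ.val_eq_gateTable x (not_lt.1 hi)]
      congr 1
      funext j
      exact ih j (Φ.pred_lt i j j.2)

noncomputable def code (hs : Φ.size ≤ s) (hfan : ∀ i, #(Φ.pred i) ≤ n) : Code n m s :=
  ⟨⟨Φ.pred, hs, hfan⟩, Φ.gateTable, Φ.out⟩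

lemma decode_code {f : (Fin n → Bool) → (Fin n → Bool)} (hf : Φ.Computes f)
    (hs : Φ.size ≤ s) (hfan : ∀ i, #(Φ.pred i) ≤ n) : (Φ.code hs hfan).decode = f := by
  funext x k
  have hrun : (Φ.code hs hfan).IsRun x (Φ.val x) :=
    ⟨Φ.val_input x, fun i hi => Φ.val_eq_gateTable x hi⟩
  obtain ⟨hin, hgate⟩ := Classical.epsilon_spec ⟨_, hrun⟩
  rw [Code.decode, Φ.eq_val_of_gateTable hin hgate]
  exact hf x k

lemma sum_two_pow_card_le (hn : 0 < n) {p : Fin m → Finset (Fin m)} (hs : ∑ i, #(p i) ≤ s)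
    (hfan : ∀ i, #(p i) ≤ n) : ∑ i, 2 ^ #(p i) ≤ (2 ^ n * s + n * m) / n := by
  rw [Nat.le_div_iff_mul_le hn]
  calc (∑ i, 2 ^ #(p i)) * n = ∑ i, n * 2 ^ #(p i) := by rw [sum_mul]; simp only [mul_comm]
    _ ≤ ∑ i, (#(p i) * 2 ^ n + n) := sum_le_sum fun i _ => Nat.mul_two_pow_le_of_le (hfan i)
    _ = (∑ i, #(p i)) * 2 ^ n + n * m := by rw [sum_add_distrib, ← sum_mul]; simp [mul_comm]
    _ ≤ 2 ^ n * s + n * m := by rw [mul_comm]; gcongr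

def codeExponent (n m s : ℕ) : ℕ := m * m + (2 ^ n * s + n * m) / n + m * n

lemma card_code_le (hn : 0 < n) : Fintype.card (Code n m s) ≤ 2 ^ codeExponent n m s := by
  calc Fintype.card (Code n m s)
      = ∑ p : {p : Fin m → Finset (Fin m) // ∑ i, #(p i) ≤ s ∧ ∀ i, #(p i) ≤ n},
          (2 ^ ∑ i, 2 ^ #(p.1 i)) * m ^ n := by
        rw [Fintype.card_sigma]
        refine sum_congr rfl fun p _ => ?_
        rw [Fintype.card_prod, Fintype.card_pi, Fintype.card_fun, Fintype.card_fin,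
          Fintype.card_fin, ← prod_pow_eq_pow_sum]
        simp
    _ ≤ ∑ _p : {p : Fin m → Finset (Fin m) // ∑ i, #(p i) ≤ s ∧ ∀ i, #(p i) ≤ n},
          2 ^ ((2 ^ n * s + n * m) / n) * (2 ^ m) ^ n :=
        sum_le_sum fun p _ => Nat.mul_le_mul
          (Nat.pow_le_pow_right two_pos (sum_two_pow_card_le hn p.2.1 p.2.2))
          (Nat.pow_le_pow_left Nat.lt_two_pow_self.le n)
    _ ≤ Fintype.card (Fin m → Finset (Fin m)) * (2 ^ ((2 ^ n * s + n * m) / n) * (2 ^ m) ^ n) := by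
        rw [sum_const, card_univ, smul_eq_mul]
        exact Nat.mul_le_mul_right _ (Fintype.card_subtype_le _)
    _ = 2 ^ codeExponent n m s := by
        simp [codeExponent, Fintype.card_finset, ← pow_mul, ← pow_add, add_assoc]

theorem card_computable_le (hn : 0 < n) :
    Nat.card {f : (Fin n → Bool) → (Fin n → Bool) //
        ∃ (m : ℕ) (Φ : GenCircuit n m), Φ.Computes f ∧ Φ.size ≤ s}
      ≤ 2 ^ codeExponent n (2 * n + s) s := by
  have hcode : ∀ F : {f : (Fin n → Bool) → (Fin n → Bool) //
      ∃ (m : ℕ) (Φ : GenCircuit n m), Φ.Computes f ∧ Φ.size ≤ s},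
      ∃ c : Code n (2 * n + s) s, c.decode = F.1 := by
    rintro ⟨f, m, Φ, hf, hs⟩
    obtain ⟨Ψ, hΨ, hΨs, hfan⟩ := Φ.exists_normalForm hf (M := 2 * n + s) (by omega)
    exact ⟨Ψ.code (hΨs.trans hs) hfan, Ψ.decode_code hΨ _ _⟩
  choose code hcode using hcode
  calc _ ≤ Nat.card (Code n (2 * n + s) s) :=
        Nat.card_le_card_of_injective code fun F G h =>
          Subtype.ext (by rw [← hcode, h, hcode])
    _ ≤ 2 ^ codeExponent n (2 * n + s) s := Nat.card_eq_fintype_card.trans_le (card_code_le hn)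

lemma codeExponent_add_le (hn : 20 ≤ n) (hs : 8 * s ≤ n ^ 2) :
    codeExponent n (2 * n + s) s + 2 ^ (n - 1) ≤ n * 2 ^ n := by
  obtain ⟨m, hm⟩ : ∃ m, m = 2 * n + s := ⟨_, rfl⟩
  rw [← hm, codeExponent]
  have hm4 : 4 * m ≤ n ^ 2 := by nlinarith
  have h1 : 16 * (n * (m * m)) ≤ n ^ 5 := by
    have := Nat.mul_le_mul hm4 hm4
    nlinarith
  have h2 : 80 * (m * n * n) ≤ n ^ 5 := by
    have := Nat.mul_le_mul hn hm4
    nlinarith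
  have h3 : n ^ 5 ≤ n ^ 2 * 2 ^ n := by
    have := Nat.mul_le_mul_left (n ^ 2) (Nat.cube_le_two_pow (n := n) (by omega))
    nlinarith
  have h4 : 8 * (2 ^ n * s) ≤ n ^ 2 * 2 ^ n := by
    have := Nat.mul_le_mul_left (2 ^ n) hs
    linarith
  have h5 : 40 * (n * 2 ^ (n - 1)) ≤ n ^ 2 * 2 ^ n := by
    have hQ : 2 * 2 ^ (n - 1) = 2 ^ n := by rw [← pow_succ']; congr 1; omega
    have := Nat.mul_le_mul_right (n * 2 ^ n) hn
    nlinarith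
  have h6 : n * m ≤ m * n * n := by nlinarith
  refine Nat.le_of_mul_le_mul_left ?_ (by omega : 0 < n)
  calc n * (m * m + (2 ^ n * s + n * m) / n + m * n + 2 ^ (n - 1))
      = n * (m * m) + n * ((2 ^ n * s + n * m) / n) + m * n * n + n * 2 ^ (n - 1) := by ring
    _ ≤ n * (m * m) + (2 ^ n * s + n * m) + m * n * n + n * 2 ^ (n - 1) := by
        gcongr
        exact Nat.mul_div_le _ _
    _ ≤ n * (n * 2 ^ n) := by nlinarith

end GenCircuit

/-- Almost all `n`-operators require more than `c·n²` wires: the number of `n`-operators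
computable with at most `c·n²` wires is at most `2^(n·2^n) / 2^(2^(n-1))`. -/
theorem card_operators_computable_with_quadratic_wires_le :
    ∃ c : ℝ, c > 0 ∧ ∃ N : ℕ, ∀ n ≥ N,
      Nat.card {f : (Fin n → Bool) → (Fin n → Bool) //
          ∃ (m : ℕ) (Φ : GenCircuit n m), Φ.Computes f ∧ (Φ.size : ℝ) ≤ c * (n : ℝ) ^ 2}
        ≤ 2 ^ (n * 2 ^ n) / 2 ^ (2 ^ (n - 1)) := by
  refine ⟨1 / 8, by norm_num, 20, fun n hn => ?_⟩
  have hsize : ∀ k : ℕ, (k : ℝ) ≤ 1 / 8 * (n : ℝ) ^ 2 ↔ k ≤ n ^ 2 / 8 := fun k => by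
    rw [Nat.le_div_iff_mul_le (by norm_num), ← Nat.cast_le (α := ℝ)]
    push_cast
    constructor <;> intro h <;> linarith
  simp_rw [hsize]
  have hexp := GenCircuit.codeExponent_add_le hn (Nat.mul_div_le (n ^ 2) 8)
  calc _ ≤ 2 ^ GenCircuit.codeExponent n (2 * n + n ^ 2 / 8) (n ^ 2 / 8) :=
        GenCircuit.card_computable_le (by omega)
    _ ≤ 2 ^ (n * 2 ^ n - 2 ^ (n - 1)) := Nat.pow_le_pow_right two_pos (by omega)
    _ = 2 ^ (n * 2 ^ n) / 2 ^ (2 ^ (n - 1)) :=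
        (Nat.pow_div (le_of_add_le_right hexp) two_pos).symm
end

section
/- Let n, r : ℕ, A : Matrix (Fin n) (Fin n) (ZMod 2), C : Matrix (Fin n) (Fin r) (ZMod 2), c : Fin n → ZMod 2, S : Fin r → Finset (Fin n), and h : (Fin n → ZMod 2) → (Fin r → ZMod 2) be such that for each j : Fin r the function x ↦ h x j depends only on S j, and A.mulVec x = C.mulVec (h x) + c for all x : Fin n → ZMod 2. Then there exists a matrix B : Matrix (Fin r) (Fin n) (ZMod 2) such that A.mulVec x = C.mulVec (B.mulVec x) for all x, and for every j : Fin r the number of nonzero entries in row j of B is at most (S j).card. (Thus a depth-2 circuit with arbitrary middle gates and linear output gates computing a linear operator can be replaced by an entirely linear circuit with no more wires on either level.) -/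
open Matrix

/-- `g` depends only on the coordinates in `T`. -/
def DependsOnlyOn {k : ℕ} (g : (Fin k → ZMod 2) → ZMod 2) (T : Finset (Fin k)) : Prop :=
  ∀ u v : Fin k → ZMod 2, (∀ i ∈ T, u i = v i) → g u = g v

/-- The number of nonzero entries of a matrix. -/
def nnz {α β : Type*} [Fintype α] [Fintype β] (M : Matrix α β (ZMod 2)) : ℕ :=
  (Finset.univ.filter (fun p : α × β => M p.1 p.2 ≠ 0)).card

/-!
Evaluating the circuit at `0` shows `c = C (h 0)`, so `A x = C (h x - h 0)` for every `x`.
Take for `B` the matrix whose `i`-th column is `h eᵢ - h 0`: then `C B` and `A` have the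
same columns, and since gate `j` only reads the inputs in `S j`, it cannot distinguish `eᵢ`
from `0` when `i ∉ S j`, so row `j` of `B` is supported in `S j`.
-/

section Linearization

variable {R m n p : Type*} [Fintype n]

def linearization [DecidableEq n] [AddGroup R] [One R] (h : (n → R) → p → R) : Matrix p n R :=
  of fun j i => h (Pi.single i 1) j - h 0 j

theorem mulVec_sub_apply_zero_of_affine [CommRing R] [Fintype p]
    {A : Matrix m n R} {C : Matrix m p R} {c : m → R} {h : (n → R) → p → R}
    (hcomp : ∀ x, A *ᵥ x = C *ᵥ h x + c) (x : n → R) :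
    C *ᵥ (h x - h 0) = A *ᵥ x := by
  have hc : C *ᵥ h 0 + c = 0 := by rw [← hcomp 0, mulVec_zero]
  rw [mulVec_sub, hcomp x, eq_neg_of_add_eq_zero_right hc, sub_eq_add_neg]

theorem mul_linearization_of_affine [DecidableEq n] [CommRing R] [Fintype p]
    {A : Matrix m n R} {C : Matrix m p R} {c : m → R} {h : (n → R) → p → R}
    (hcomp : ∀ x, A *ᵥ x = C *ᵥ h x + c) :
    C * linearization h = A := by
  ext k i
  have hcol := congrFun (mulVec_sub_apply_zero_of_affine hcomp (Pi.single i 1)) k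
  rw [mulVec_single_one] at hcol
  rw [← col_apply A i k, ← hcol, mul_apply]
  rfl

end Linearization

theorem DependsOnlyOn.apply_single_eq_apply_zero {k : ℕ} {g : (Fin k → ZMod 2) → ZMod 2}
    {T : Finset (Fin k)} (hg : DependsOnlyOn g T) {i : Fin k} (hi : i ∉ T) (a : ZMod 2) :
    g (Pi.single i a) = g 0 :=
  hg _ _ fun i' hi' => by rw [Pi.single_eq_of_ne (ne_of_mem_of_not_mem hi' hi), Pi.zero_apply]

theorem card_support_linearization_row_le {n r : ℕ} {h : (Fin n → ZMod 2) → Fin r → ZMod 2}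
    {S : Fin r → Finset (Fin n)} {j : Fin r} (hdep : DependsOnlyOn (fun x => h x j) (S j)) :
    (Finset.univ.filter (fun i : Fin n => linearization h j i ≠ 0)).card ≤ (S j).card := by
  refine Finset.card_le_card fun i hi => ?_
  by_contra hiS
  rw [Finset.mem_filter] at hi
  exact hi.2 (sub_eq_zero.2 (hdep.apply_single_eq_apply_zero hiS 1))

/-- A depth-2 circuit with arbitrary middle gates and linear output gates computing a
linear operator can be replaced by an entirely linear circuit with no more wires. -/
theorem linearize_middle_layer (n r : ℕ) (A : Matrix (Fin n) (Fin n) (ZMod 2))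
    (C : Matrix (Fin n) (Fin r) (ZMod 2)) (c : Fin n → ZMod 2)
    (S : Fin r → Finset (Fin n)) (h : (Fin n → ZMod 2) → (Fin r → ZMod 2))
    (hdep : ∀ j : Fin r, DependsOnlyOn (fun x => h x j) (S j))
    (hcomp : ∀ x : Fin n → ZMod 2, A.mulVec x = C.mulVec (h x) + c) :
    ∃ B : Matrix (Fin r) (Fin n) (ZMod 2),
      (∀ x : Fin n → ZMod 2, A.mulVec x = C.mulVec (B.mulVec x)) ∧
      ∀ j : Fin r, (Finset.univ.filter (fun i : Fin n => B j i ≠ 0)).card ≤ (S j).card :=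
  ⟨linearization h,
    fun x => by rw [mulVec_mulVec, mul_linearization_of_affine hcomp],
    fun j => card_support_linearization_row_le (hdep j)⟩
end

section
/- There is a constant c > 0 and N : ℕ such that for every n ≥ N there exists a matrix A : Matrix (Fin n) (Fin n) (ZMod 2) such that every depth-2 circuit with linear middle gates computing the linear operator x ↦ A.mulVec x has at least c * n^2 / Real.logb 2 n wires. -/
/-!
Output gate `i` sees only the middle gates in `T i`, so `A i ⬝ᵥ x` is a function of the parities
`B j ⬝ᵥ x`, `j ∈ T i`; by duality `A i` lies in the span of these rows, i.e. `A = C * B` with `C`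
supported on the wires `T`. After dropping the zero rows of `B`, a matrix computed with `w` wires
is a product through an inner dimension `k ≤ w` with at most `w` nonzero entries in all. Over
`ZMod 2` such a pair of factors is determined by its support, so at most `(w + 1)² (2nw + 1)ʷ`
matrices arise; for `w = n² / (8 log₂ n)` this is below `2^(n²)`, the number of all matrices.
-/

open Matrix

open Finset

section Nnz

variable {α β : Type*} [Fintype α] [Fintype β]

lemma nnz_eq_sum_card_row (M : Matrix α β (ZMod 2)) :
    nnz M = ∑ a, #{b | M a b ≠ 0} := by
  simp only [nnz, card_filter, Fintype.sum_prod_type]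

lemma card_le_nnz_of_rows_ne_zero {M : Matrix α β (ZMod 2)} {s : Finset α}
    (hs : ∀ a ∈ s, ∃ b, M a b ≠ 0) : #s ≤ nnz M := by
  rw [nnz_eq_sum_card_row, card_eq_sum_ones]
  refine (sum_le_sum fun a ha => ?_).trans (sum_le_sum_of_subset (subset_univ s))
  obtain ⟨b, hb⟩ := hs a ha
  exact card_pos.2 ⟨b, by simpa using hb⟩

lemma nnz_le_sum_card {M : Matrix α β (ZMod 2)} (T : α → Finset β)
    (hT : ∀ a b, M a b ≠ 0 → b ∈ T a) : nnz M ≤ ∑ a, #(T a) := by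
  rw [nnz_eq_sum_card_row]
  exact sum_le_sum fun a _ => card_le_card fun b hb => hT a b (mem_filter.1 hb).2

lemma nnz_submatrix_le {α' β' : Type*} [Fintype α'] [Fintype β'] (M : Matrix α β (ZMod 2))
    {f : α' → α} {g : β' → β} (hf : Function.Injective f) (hg : Function.Injective g) :
    nnz (M.submatrix f g) ≤ nnz M :=
  card_le_card_of_injOn (Prod.map f g) (fun p hp => by
    simp only [coe_filter, mem_univ, true_and] at hp ⊢
    exact hp) (hf.prodMap hg).injOn

end Nnz

lemma zmod_two_eq_of_ne_zero_iff_ne_zero : ∀ {a b : ZMod 2}, (a ≠ 0 ↔ b ≠ 0) → a = b := by decide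

lemma card_sparse_functions_le {X : Type*} [Fintype X] [DecidableEq X] (m : ℕ) :
    #{f : X → ZMod 2 | #{x | f x ≠ 0} ≤ m} ≤ (m + 1) * (Fintype.card X + 1) ^ m := by
  have hsupp : Function.Injective fun f : X → ZMod 2 => ({x | f x ≠ 0} : Finset X) :=
    fun f g hfg => funext fun x => zmod_two_eq_of_ne_zero_iff_ne_zero <| by
      simpa using congrArg (x ∈ ·) hfg
  calc #{f : X → ZMod 2 | #{x | f x ≠ 0} ≤ m}
      ≤ #((range (m + 1)).biUnion fun k => powersetCard k (univ : Finset X)) :=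
        card_le_card_of_injOn _ (fun f hf => by
          simp only [coe_filter, mem_univ, true_and] at hf
          simp only [coe_biUnion, coe_range, Set.mem_iUnion, mem_coe, mem_powersetCard]
          exact ⟨_, Nat.lt_succ_of_le hf, subset_univ _, rfl⟩) hsupp.injOn
    _ ≤ ∑ k ∈ range (m + 1), (Fintype.card X).choose k := by
        refine card_biUnion_le.trans_eq ?_
        simp only [card_powersetCard, card_univ]
    _ ≤ ∑ k ∈ range (m + 1), (Fintype.card X + 1) ^ m := by
        refine sum_le_sum fun k hk => (Nat.choose_le_pow _ _).trans ?_
        exact (Nat.pow_le_pow_left (Nat.le_succ _) k).trans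
          (Nat.pow_le_pow_right (Nat.succ_pos _) (Nat.lt_succ_iff.1 (mem_range.1 hk)))
    _ = (m + 1) * (Fintype.card X + 1) ^ m := by simp

lemma mem_span_of_forall_dotProduct_eq_zero {K ι : Type*} [Field K] [Fintype ι] [DecidableEq ι]
    {S : Set (ι → K)} {a : ι → K} (h : ∀ x, (∀ v ∈ S, v ⬝ᵥ x = 0) → a ⬝ᵥ x = 0) :
    a ∈ Submodule.span K S := by
  rw [← Subspace.dualAnnihilator_dualCoannihilator_eq (W := Submodule.span K S),
    Submodule.mem_dualCoannihilator]
  intro φ hφ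
  rw [Submodule.mem_dualAnnihilator] at hφ
  obtain ⟨x, rfl⟩ := (dotProductEquiv K ι).surjective φ
  simp only [dotProductEquiv_apply_apply, dotProduct_comm x] at hφ ⊢
  exact h x fun v hv => hφ v (Submodule.subset_span hv)

section Circuit

variable {σ : Type*} [Fintype σ] [DecidableEq σ] {r : ℕ}

lemma mem_span_rows_of_dependsOnlyOn {B : Matrix (Fin r) σ (ZMod 2)} {T : Finset (Fin r)}
    {g : (Fin r → ZMod 2) → ZMod 2} {a : σ → ZMod 2} (hg : DependsOnlyOn g T)
    (h : ∀ x, g (B *ᵥ x) = a ⬝ᵥ x) : a ∈ Submodule.span (ZMod 2) (B '' T) := by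
  refine mem_span_of_forall_dotProduct_eq_zero fun x hx => ?_
  rw [← h, hg (B *ᵥ x) (B *ᵥ 0) fun j hj => ?_, h, dotProduct_zero]
  rw [mulVec_zero]
  exact hx (B j) ⟨j, hj, rfl⟩

lemma exists_mul_eq_of_dependsOnlyOn {ι : Type*} {A : Matrix ι σ (ZMod 2)}
    {B : Matrix (Fin r) σ (ZMod 2)} {T : ι → Finset (Fin r)}
    {g : ι → (Fin r → ZMod 2) → ZMod 2} (hg : ∀ i, DependsOnlyOn (g i) (T i))
    (hA : ∀ x i, g i (B *ᵥ x) = (A *ᵥ x) i) :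
    ∃ C : Matrix ι (Fin r) (ZMod 2), (∀ i j, C i j ≠ 0 → j ∈ T i) ∧ C * B = A := by
  have hspan i : A i ∈ Submodule.span (ZMod 2) (B '' T i) :=
    mem_span_rows_of_dependsOnlyOn (hg i) fun x => hA x i
  choose c hc using fun i => (Submodule.mem_span_image_finset_iff_exists_fun' _).1 (hspan i)
  refine ⟨of fun i j => if j ∈ T i then c i j else 0, fun i j => by simp +contextual, ?_⟩
  ext i k
  rw [← hc i]
  simp [mul_apply, ite_mul, Finset.sum_apply]

end Circuit

section SparseFactorization

variable {α β : Type*} [Fintype α] [Fintype β]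

def IsSparseProduct (A : Matrix α β (ZMod 2)) (k m : ℕ) : Prop :=
  ∃ (C : Matrix α (Fin k) (ZMod 2)) (B : Matrix (Fin k) β (ZMod 2)),
    C * B = A ∧ nnz C + nnz B ≤ m

def HasSparseFactorization (A : Matrix α β (ZMod 2)) (m : ℕ) : Prop :=
  ∃ k ≤ m, IsSparseProduct A k m

lemma hasSparseFactorization_mul {ι : Type*} [Fintype ι] {m : ℕ} (C : Matrix α ι (ZMod 2))
    (B : Matrix ι β (ZMod 2)) (h : nnz C + nnz B ≤ m) : HasSparseFactorization (C * B) m := by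
  classical
  set U : Finset ι := {j | ∃ b, B j b ≠ 0}
  set e : Fin #U → ι := fun q => U.equivFin.symm q
  have he : Function.Injective e := Subtype.val_injective.comp U.equivFin.symm.injective
  have hU : #U ≤ nnz B := card_le_nnz_of_rows_ne_zero fun j hj => (mem_filter.1 hj).2
  refine ⟨#U, by omega, C.submatrix id e, B.submatrix e id, ?_, ?_⟩
  · ext a b
    refine Fintype.sum_of_injective e he _ _ (fun j hj => ?_) fun q => rfl
    have hBj : B j b = 0 := by
      by_contra hne
      exact hj ⟨U.equivFin ⟨j, mem_filter.2 ⟨mem_univ _, b, hne⟩⟩, by simp [e]⟩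
    simp [hBj]
  · have := nnz_submatrix_le C Function.injective_id he
    have := nnz_submatrix_le B he Function.injective_id
    omega

section Counting

variable [DecidableEq α] [DecidableEq β]

lemma card_isSparseProduct_le (k m : ℕ) [DecidablePred (IsSparseProduct (α := α) (β := β) · k m)] :
    #{A : Matrix α β (ZMod 2) | IsSparseProduct A k m} ≤
      (m + 1) * (Fintype.card α * k + k * Fintype.card β + 1) ^ m := by
  let Φ : ((α × Fin k) ⊕ (Fin k × β) → ZMod 2) → Matrix α β (ZMod 2) := fun f =>
    of (fun a q => f (.inl (a, q))) * of (fun q b => f (.inr (q, b)))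
  have hsub : ({A | IsSparseProduct A k m} : Finset (Matrix α β (ZMod 2))) ⊆
      image Φ {f | #{x | f x ≠ 0} ≤ m} := by
    intro A hA
    obtain ⟨C, B, rfl, hCB⟩ := (mem_filter.1 hA).2
    refine mem_image.2 ⟨Sum.elim (fun p => C p.1 p.2) (fun p => B p.1 p.2),
      mem_filter.2 ⟨mem_univ _, ?_⟩, rfl⟩
    convert hCB using 1
    simp only [nnz, card_filter, Fintype.sum_sum_type, Sum.elim_inl, Sum.elim_inr]
    congr
  calc _ ≤ _ := card_le_card hsub
    _ ≤ _ := card_image_le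
    _ ≤ _ := card_sparse_functions_le m
    _ = _ := by simp [mul_comm]

lemma card_hasSparseFactorization_le (m : ℕ)
    [DecidablePred (HasSparseFactorization (α := α) (β := β) · m)] :
    #{A : Matrix α β (ZMod 2) | HasSparseFactorization A m} ≤
      (m + 1) ^ 2 * (Fintype.card α * m + m * Fintype.card β + 1) ^ m := by
  classical
  calc _ ≤ #((range (m + 1)).biUnion fun k => {A | IsSparseProduct A k m}) := by
        refine card_le_card fun A hA => ?_
        obtain ⟨k, hk, hkA⟩ := (mem_filter.1 hA).2
        exact mem_biUnion.2 ⟨k, mem_range.2 (Nat.lt_succ_of_le hk), mem_filter.2 ⟨mem_univ _, hkA⟩⟩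
    _ ≤ ∑ k ∈ range (m + 1), (m + 1) * (Fintype.card α * k + k * Fintype.card β + 1) ^ m :=
        card_biUnion_le.trans (sum_le_sum fun k _ => card_isSparseProduct_le k m)
    _ ≤ ∑ k ∈ range (m + 1), (m + 1) * (Fintype.card α * m + m * Fintype.card β + 1) ^ m := by
        gcongr with k hk
        all_goals exact Nat.lt_succ_iff.1 (mem_range.1 hk)
    _ = _ := by simp [sq, mul_assoc]

end Counting

lemma exists_not_hasSparseFactorization {m : ℕ}
    (hm : (m + 1) ^ 2 * (Fintype.card α * m + m * Fintype.card β + 1) ^ m <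
      2 ^ (Fintype.card α * Fintype.card β)) :
    ∃ A : Matrix α β (ZMod 2), ¬ HasSparseFactorization A m := by
  classical
  by_contra! hall
  have hcard : Fintype.card (Matrix α β (ZMod 2)) = 2 ^ (Fintype.card α * Fintype.card β) := by
    rw [Fintype.card_congr (α := Matrix α β (ZMod 2)) (β := α → β → ZMod 2) (Equiv.refl _)]
    simp [← pow_mul, mul_comm]
  have := card_hasSparseFactorization_le (α := α) (β := β) m
  rw [filter_true_of_mem fun A _ => hall A, card_univ, hcard] at this
  omega

end SparseFactorization

lemma sparse_count_lt_two_pow {n m : ℕ} (hn : 4 ≤ n) (hm : m * (8 * Nat.log 2 n) ≤ n * n) :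
    (m + 1) ^ 2 * (n * m + m * n + 1) ^ m < 2 ^ (n * n) := by
  set L := Nat.log 2 n
  have hL : 2 ≤ L := Nat.le_log_of_pow_le one_lt_two (by omega)
  have hnL : n < 2 ^ (L + 1) := Nat.lt_pow_succ_log_self one_lt_two n
  have hfirst : (m + 1) ^ 2 ≤ 2 ^ (2 * m) := by
    rw [pow_mul']
    exact Nat.pow_le_pow_left Nat.lt_two_pow_self 2
  have hsecond : n * m + m * n + 1 ≤ 2 ^ (3 * L + 5) := by
    have hn3 : n ^ 3 ≤ 2 ^ (3 * L + 3) := by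
      rw [show 3 * L + 3 = (L + 1) * 3 by ring, pow_mul]
      exact Nat.pow_le_pow_left hnL.le 3
    have : m ≤ n * n := le_trans (Nat.le_mul_of_pos_right m (by omega)) hm
    have : n * m ≤ n ^ 3 := by rw [pow_succ']; nlinarith
    have : 1 ≤ n ^ 3 := Nat.one_le_pow _ _ (by omega)
    rw [pow_add] at hn3 ⊢
    nlinarith
  calc (m + 1) ^ 2 * (n * m + m * n + 1) ^ m ≤ 2 ^ (2 * m) * (2 ^ (3 * L + 5)) ^ m :=
        Nat.mul_le_mul hfirst (Nat.pow_le_pow_left hsecond m)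
    _ = 2 ^ ((3 * L + 7) * m) := by rw [← pow_mul, ← pow_add]; ring_nf
    _ < 2 ^ (n * n) := by
        refine Nat.pow_lt_pow_right one_lt_two ?_
        rcases Nat.eq_zero_or_pos m with h0 | h0
        · rw [h0]; positivity
        · nlinarith

lemma div_logb_lt_succ {n : ℕ} (hn : 2 ≤ n) :
    (n : ℝ) ^ 2 / (8 * Real.logb 2 n) < ((n * n / (8 * Nat.log 2 n) : ℕ) : ℝ) + 1 := by
  set L := Nat.log 2 n
  have hL : 0 < L := Nat.log_pos one_lt_two hn
  have hLlogb : (L : ℝ) ≤ Real.logb 2 n := Real.natLog_le_logb n 2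
  have hnat : n * n < 8 * L * (n * n / (8 * L) + 1) := Nat.lt_mul_div_succ _ (by omega)
  have hnat' : (n : ℝ) ^ 2 < 8 * L * ((n * n / (8 * L) : ℕ) + 1) := by
    rw [sq]; exact_mod_cast hnat
  calc (n : ℝ) ^ 2 / (8 * Real.logb 2 n) ≤ (n : ℝ) ^ 2 / (8 * L) := by
        gcongr
    _ < _ := by
        rw [div_lt_iff₀ (by positivity)]
        linarith

/-- Some linear `n`-operators require `Ω(n²/log n)` wires in depth-2 circuits whose
middle gates are linear (parities) while output gates may be arbitrary. -/
theorem lower_bound_linear_middle_gates :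
    ∃ c : ℝ, c > 0 ∧ ∃ N : ℕ, ∀ n ≥ N,
      ∃ A : Matrix (Fin n) (Fin n) (ZMod 2),
        ∀ (r : ℕ) (B : Matrix (Fin r) (Fin n) (ZMod 2))
          (T : Fin n → Finset (Fin r)) (g : Fin n → ((Fin r → ZMod 2) → ZMod 2)),
          (∀ i : Fin n, DependsOnlyOn (g i) (T i)) →
          (∀ (x : Fin n → ZMod 2) (i : Fin n), g i (B.mulVec x) = A.mulVec x i) →
          c * (n : ℝ) ^ 2 / Real.logb 2 n ≤ (nnz B + ∑ i : Fin n, (T i).card : ℕ) := by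
  refine ⟨1 / 8, by norm_num, 4, fun n hn => ?_⟩
  set m := n * n / (8 * Nat.log 2 n)
  obtain ⟨A, hA⟩ := exists_not_hasSparseFactorization (α := Fin n) (β := Fin n) (m := m)
    (by simpa using sparse_count_lt_two_pow hn (Nat.div_mul_le_self _ _))
  refine ⟨A, fun r B T g hg hcomp => ?_⟩
  obtain ⟨C, hCT, rfl⟩ := exists_mul_eq_of_dependsOnlyOn hg hcomp
  have hwires : m < nnz B + ∑ i, #(T i) := by
    by_contra! h
    exact hA (hasSparseFactorization_mul C B (by linarith [nnz_le_sum_card T hCT]))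
  calc 1 / 8 * (n : ℝ) ^ 2 / Real.logb 2 n = (n : ℝ) ^ 2 / (8 * Real.logb 2 n) := by
        rw [one_div_mul_eq_div, div_div]
    _ ≤ (m : ℝ) + 1 := (div_logb_lt_succ (n := n) (by omega)).le
    _ ≤ _ := by exact_mod_cast hwires
end

section
/- Let m, n, L : ℕ with n ≥ 1, and let d : Fin m → ℕ satisfy d i ≤ n for all i and ∑ i, d i ≤ L. Then ∑ i, (2 : ℝ)^(d i) ≤ (m : ℝ) * 2^((2 * L : ℝ) / n) + ((n : ℝ) / 2) * 2^n. -/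
/-!
Markov's inequality in pointwise form: for a threshold `T > 0` and `0 ≤ x ≤ a`,
`b ^ x ≤ b ^ T + (x / T) * b ^ a`, since an exponent above `T` has `x / T ≥ 1`.
Summing over the gates with `T = 2L/n` gives the bound, because `(∑ d i) / T ≤ L / T = n / 2`.
-/

open Finset

theorem rpow_le_rpow_add_div_mul_rpow {b x a T : ℝ} (hb : 1 ≤ b) (hT : 0 < T)
    (hx₀ : 0 ≤ x) (hxa : x ≤ a) : b ^ x ≤ b ^ T + x / T * b ^ a := by
  rcases le_or_gt x T with hxT | hTx
  · have hpow := Real.rpow_le_rpow_of_exponent_le hb hxT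
    have hrest : 0 ≤ x / T * b ^ a := by positivity
    linarith
  · have hone : 1 ≤ x / T := (one_le_div hT).2 hTx.le
    calc b ^ x ≤ 1 * b ^ a := by rw [one_mul]; exact Real.rpow_le_rpow_of_exponent_le hb hxa
      _ ≤ x / T * b ^ a := by gcongr
      _ ≤ b ^ T + x / T * b ^ a := le_add_of_nonneg_left (by positivity)

theorem sum_rpow_le_card_mul_rpow_add {ι : Type*} (s : Finset ι) (x : ι → ℝ) {b a T : ℝ}
    (hb : 1 ≤ b) (hT : 0 < T) (hx₀ : ∀ i ∈ s, 0 ≤ x i) (hxa : ∀ i ∈ s, x i ≤ a) :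
    ∑ i ∈ s, b ^ x i ≤ #s * b ^ T + (∑ i ∈ s, x i) / T * b ^ a := by
  calc ∑ i ∈ s, b ^ x i ≤ ∑ i ∈ s, (b ^ T + x i / T * b ^ a) :=
        sum_le_sum fun i hi => rpow_le_rpow_add_div_mul_rpow hb hT (hx₀ i hi) (hxa i hi)
    _ = #s * b ^ T + (∑ i ∈ s, x i) / T * b ^ a := by
        rw [sum_add_distrib, sum_const, nsmul_eq_mul, ← sum_mul, sum_div]

theorem sum_two_pow_fanin_le_general (m n L : ℕ) (d : Fin m → ℕ)
    (hd : ∀ i : Fin m, d i ≤ n) (hL : ∑ i : Fin m, d i ≤ L) :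
    ∑ i : Fin m, (2 : ℝ) ^ (d i)
      ≤ (m : ℝ) * (2 : ℝ) ^ ((2 * (L : ℝ)) / (n : ℝ)) + ((n : ℝ) / 2) * 2 ^ n := by
  -- Degenerate case: all fanins vanish, and the exponent `2L/n` is `0` (also for `n = 0`, as `x / 0 = 0`).
  by_cases hnL : n = 0 ∨ L = 0
  · have hd0 : ∀ i, d i = 0 := by
      rcases hnL with rfl | rfl
      · exact fun i => Nat.le_zero.1 (hd i)
      · exact fun i => sum_eq_zero_iff.1 (Nat.le_zero.1 hL) i (mem_univ i)
    have hT : (2 * (L : ℝ)) / n = 0 := by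
      rcases hnL with h | h <;> simp [h]
    simp only [hd0, pow_zero, sum_const, card_univ, Fintype.card_fin, nsmul_eq_mul, mul_one, hT,
      Real.rpow_zero]
    exact le_add_of_nonneg_right (by positivity)
  · have hn : (0 : ℝ) < n := by exact_mod_cast Nat.pos_of_ne_zero (not_or.1 hnL).1
    have hL0 : (0 : ℝ) < L := by exact_mod_cast Nat.pos_of_ne_zero (not_or.1 hnL).2
    have hT : 0 < 2 * (L : ℝ) / n := by positivity
    have hsum := sum_rpow_le_card_mul_rpow_add univ (fun i => (d i : ℝ)) (a := n) one_le_two hT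
      (fun i _ => by positivity) (fun i _ => by exact_mod_cast hd i)
    simp only [Real.rpow_natCast, card_univ, Fintype.card_fin] at hsum
    calc ∑ i, (2 : ℝ) ^ d i
        ≤ m * 2 ^ (2 * (L : ℝ) / n) + (∑ i, (d i : ℝ)) / (2 * L / n) * 2 ^ n := hsum
      _ ≤ m * 2 ^ (2 * (L : ℝ) / n) + L / (2 * L / n) * 2 ^ n := by
          gcongr; exact_mod_cast hL
      _ = m * 2 ^ (2 * (L : ℝ) / n) + n / 2 * 2 ^ n := by field_simp

/-- Key counting estimate: if `d i ≤ n` for all `i` and `∑ d i ≤ L`, then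
`∑ 2^(d i) ≤ m·2^(2L/n) + (n/2)·2^n`. -/
theorem sum_two_pow_fanin_le (m n L : ℕ) (hn : 1 ≤ n) (d : Fin m → ℕ)
    (hd : ∀ i : Fin m, d i ≤ n) (hL : ∑ i : Fin m, d i ≤ L) :
    ∑ i : Fin m, (2 : ℝ) ^ (d i)
      ≤ (m : ℝ) * (2 : ℝ) ^ ((2 * (L : ℝ)) / (n : ℝ)) + ((n : ℝ) / 2) * 2 ^ n :=
  sum_two_pow_fanin_le_general m n L d hd hL
end

section
/- Let n, r : ℕ, A : Matrix (Fin n) (Fin n) (ZMod 2), C : Matrix (Fin n) (Fin r) (ZMod 2), and h : (Fin n → ZMod 2) → (Fin r → ZMod 2). If A.mulVec x = C.mulVec (h x) for all x : Fin n → ZMod 2, then also A.mulVec x = C.mulVec (∑ i, x i • h (Pi.single i 1)) for all x; that is, replacing h by the linear operator h'(x) = ∑ i, x i • h(eᵢ) (where eᵢ is the i-th unit vector) leaves the computed operator unchanged. -/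
open Matrix

theorem LinearMap.apply_eq_apply_sum_smul_single {R M N ι : Type*} [Semiring R] [Fintype ι]
    [DecidableEq ι] [AddCommMonoid M] [Module R M] [AddCommMonoid N] [Module R N]
    (g : (ι → R) →ₗ[R] N) (f : M →ₗ[R] N) (h : (ι → R) → M)
    (hfac : ∀ x, g x = f (h x)) (x : ι → R) :
    g x = f (∑ i, x i • h (Pi.single i 1)) := by
  calc g x = g (∑ i, x i • Pi.single i 1) := by rw [← pi_eq_sum_univ' x]
    _ = ∑ i, x i • f (h (Pi.single i 1)) := by simp only [map_sum, map_smul, ← hfac]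
    _ = f (∑ i, x i • h (Pi.single i 1)) := by simp only [map_sum, map_smul]

/-- Linearization step: if a depth-2 circuit with linear output gates computes the
linear operator `x ↦ A.mulVec x`, then replacing the middle-layer operator `h` by the
linear operator `x ↦ ∑ i, x i • h eᵢ` leaves the computed operator unchanged. -/
theorem replace_middle_by_linear (n r : ℕ) (A : Matrix (Fin n) (Fin n) (ZMod 2))
    (C : Matrix (Fin n) (Fin r) (ZMod 2)) (h : (Fin n → ZMod 2) → (Fin r → ZMod 2))
    (hcomp : ∀ x : Fin n → ZMod 2, A.mulVec x = C.mulVec (h x)) :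
    ∀ x : Fin n → ZMod 2,
      A.mulVec x = C.mulVec (∑ i : Fin n, x i • h (Pi.single i 1)) :=
  (mulVecLin A).apply_eq_apply_sum_smul_single (mulVecLin C) h hcomp
end
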